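/- Let K, λ ∈ ℝ, let I ⊆ ℝ be an open interval, and let f : I → ℝ be locally Lipschitz. Then f is a subsolution of f'' − K f = λ in the sense of Jensen if and only if it satisfies the following 'outer Jensen' condition: for all t₁ < t₂ in I with t₂ − t₁ < D_K, the unique solution g of g'' − K g = λ with g(t₁) = f(t₁) and g(t₂) = f(t₂) satisfies f ≥ g on (I ∖ (t₁, t₂)) ∩ (t₂ − D_K, t₁ + D_K). -/

import Mathlib

open Set MeasureTheory

/-- `x < D_K`, where `D_K := π/√(-K)` if `K < 0` and `D_K := ∞` if `K ≥ 0`. -/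
def LtDK (K x : ℝ) : Prop := K < 0 → x < Real.pi / Real.sqrt (-K)

/-- `x ≤ D_K`, where `D_K := π/√(-K)` if `K < 0` and `D_K := ∞` if `K ≥ 0`. -/
def LeDK (K x : ℝ) : Prop := K < 0 → x ≤ Real.pi / Real.sqrt (-K)

/-- `g : ℝ → ℝ` is a twice differentiable solution of `g'' - K g = lam` (on all of `ℝ`). -/
def IsSol (K lam : ℝ) (g : ℝ → ℝ) : Prop :=
  Differentiable ℝ g ∧ ∀ t, HasDerivAt (deriv g) (K * g t + lam) t

/-- `g` is a twice differentiable solution of `g'' - K g = lam` on the set `s`. -/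
def IsSolOn (K lam : ℝ) (g : ℝ → ℝ) (s : Set ℝ) : Prop :=
  ∀ t ∈ s, DifferentiableAt ℝ g t ∧ HasDerivAt (deriv g) (K * g t + lam) t

/-- `f` is a subsolution of `f'' - K f = lam` in the sense of Jensen on `s`:
for all `t₁ < t₂` in `s` with `t₂ - t₁ < D_K`, the (unique) solution `g` of the ODE
with `g t₁ = f t₁` and `g t₂ = f t₂` satisfies `f ≤ g` on `[t₁, t₂]`. -/
def JensenSub (K lam : ℝ) (f : ℝ → ℝ) (s : Set ℝ) : Prop :=
  ∀ t₁ ∈ s, ∀ t₂ ∈ s, t₁ < t₂ → LtDK K (t₂ - t₁) →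
    ∀ g : ℝ → ℝ, IsSol K lam g → g t₁ = f t₁ → g t₂ = f t₂ →
      ∀ t ∈ Set.Icc t₁ t₂, f t ≤ g t

/-- `f` is a supersolution of `f'' - K f = lam` in the sense of Jensen on `s`. -/
def JensenSuper (K lam : ℝ) (f : ℝ → ℝ) (s : Set ℝ) : Prop :=
  ∀ t₁ ∈ s, ∀ t₂ ∈ s, t₁ < t₂ → LtDK K (t₂ - t₁) →
    ∀ g : ℝ → ℝ, IsSol K lam g → g t₁ = f t₁ → g t₂ = f t₂ →
      ∀ t ∈ Set.Icc t₁ t₂, g t ≤ f t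

/-- `f` is a distributional subsolution of `f'' - K f ≥ lam` on `I`. -/
def DistribSub (K lam : ℝ) (f : ℝ → ℝ) (I : Set ℝ) : Prop :=
  ∀ φ : ℝ → ℝ, ContDiff ℝ (⊤ : ℕ∞) φ → HasCompactSupport φ → tsupport φ ⊆ I →
    (∀ x, 0 ≤ φ x) →
    0 ≤ ∫ t in I, (f t * deriv (deriv φ) t - K * f t * φ t - lam * φ t)

/-- `f` is a distributional supersolution of `f'' - K f ≤ lam` on `I`. -/
def DistribSuper (K lam : ℝ) (f : ℝ → ℝ) (I : Set ℝ) : Prop :=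
  ∀ φ : ℝ → ℝ, ContDiff ℝ (⊤ : ℕ∞) φ → HasCompactSupport φ → tsupport φ ⊆ I →
    (∀ x, 0 ≤ φ x) →
    (∫ t in I, (f t * deriv (deriv φ) t - K * f t * φ t - lam * φ t)) ≤ 0

/-- `f` satisfies the Jensen subsolution inequality for the parameters `(t₁, t₂, t₃)`:
`f t₂ ≤ g t₂` for the (unique) solution `g` of `g'' - K g = lam`
with `g t₁ = f t₁` and `g t₃ = f t₃`. -/
def JensenSubIneq (K lam : ℝ) (f : ℝ → ℝ) (t₁ t₂ t₃ : ℝ) : Prop :=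
  ∀ g : ℝ → ℝ, IsSol K lam g → g t₁ = f t₁ → g t₃ = f t₃ → f t₂ ≤ g t₂

/-- `f` satisfies the Jensen supersolution inequality for the parameters `(t₁, t₂, t₃)`. -/
def JensenSuperIneq (K lam : ℝ) (f : ℝ → ℝ) (t₁ t₂ t₃ : ℝ) : Prop :=
  ∀ g : ℝ → ℝ, IsSol K lam g → g t₁ = f t₁ → g t₃ = f t₃ → g t₂ ≤ f t₂


noncomputable def sK (K x : ℝ) : ℝ :=
  if K < 0 then Real.sin (Real.sqrt (-K) * x) / Real.sqrt (-K)
  else if K = 0 then x else Real.sinh (Real.sqrt K * x) / Real.sqrt K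

noncomputable def cK (K x : ℝ) : ℝ :=
  if K < 0 then Real.cos (Real.sqrt (-K) * x)
  else if K = 0 then 1 else Real.cosh (Real.sqrt K * x)

lemma sK_zero (K : ℝ) : sK K 0 = 0 := by
  unfold sK; split_ifs <;> simp

lemma cK_zero (K : ℝ) : cK K 0 = 1 := by
  unfold cK; split_ifs <;> simp

lemma sK_neg (K x : ℝ) : sK K (-x) = -sK K x := by
  unfold sK; split_ifs <;> simp [neg_div]

lemma sK_hasDerivAt (K x : ℝ) : HasDerivAt (fun y => sK K y) (cK K x) x := by
  rcases lt_trichotomy K 0 with hK | hK | hK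
  · have hω : (0:ℝ) < Real.sqrt (-K) := Real.sqrt_pos.2 (by linarith)
    have h1 : HasDerivAt (fun y => Real.sin (Real.sqrt (-K) * y))
        (Real.cos (Real.sqrt (-K) * x) * (Real.sqrt (-K) * 1)) x :=
      (Real.hasDerivAt_sin _).comp x ((hasDerivAt_id x).const_mul _)
    have h2 := h1.div_const (Real.sqrt (-K))
    simp only [sK, cK, if_pos hK]
    refine h2.congr_deriv ?_
    field_simp
  · subst hK
    simp only [sK, cK, lt_irrefl, if_false, if_pos rfl]
    exact hasDerivAt_id x
  · have hω : (0:ℝ) < Real.sqrt K := Real.sqrt_pos.2 hK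
    have h1 : HasDerivAt (fun y => Real.sinh (Real.sqrt K * y))
        (Real.cosh (Real.sqrt K * x) * (Real.sqrt K * 1)) x :=
      (Real.hasDerivAt_sinh _).comp x ((hasDerivAt_id x).const_mul _)
    have h2 := h1.div_const (Real.sqrt K)
    simp only [sK, cK, if_neg (not_lt.2 hK.le), if_neg hK.ne']
    refine h2.congr_deriv ?_
    field_simp

lemma cK_hasDerivAt (K x : ℝ) : HasDerivAt (fun y => cK K y) (K * sK K x) x := by
  rcases lt_trichotomy K 0 with hK | hK | hK
  · have hω : (0:ℝ) < Real.sqrt (-K) := Real.sqrt_pos.2 (by linarith)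
    have hω2 : Real.sqrt (-K) * Real.sqrt (-K) = -K := Real.mul_self_sqrt (by linarith)
    have h1 : HasDerivAt (fun y => Real.cos (Real.sqrt (-K) * y))
        (-Real.sin (Real.sqrt (-K) * x) * (Real.sqrt (-K) * 1)) x :=
      (Real.hasDerivAt_cos _).comp x ((hasDerivAt_id x).const_mul _)
    simp only [sK, cK, if_pos hK]
    convert h1 using 1
    field_simp
    linear_combination Real.sin (Real.sqrt (-K) * x) * hω2
  · subst hK
    simp only [sK, cK, lt_irrefl, if_false, if_pos rfl, zero_mul]
    exact hasDerivAt_const x 1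
  · have hω : (0:ℝ) < Real.sqrt K := Real.sqrt_pos.2 hK
    have hω2 : Real.sqrt K * Real.sqrt K = K := Real.mul_self_sqrt hK.le
    have h1 : HasDerivAt (fun y => Real.cosh (Real.sqrt K * y))
        (Real.sinh (Real.sqrt K * x) * (Real.sqrt K * 1)) x :=
      (Real.hasDerivAt_cosh _).comp x ((hasDerivAt_id x).const_mul _)
    simp only [sK, cK, if_neg (not_lt.2 hK.le), if_neg hK.ne']
    convert h1 using 1
    field_simp
    linear_combination (-Real.sinh (Real.sqrt K * x)) * hω2

lemma sK_pos (K x : ℝ) (hx : 0 < x) (hD : LtDK K x) : 0 < sK K x := by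
  rcases lt_trichotomy K 0 with hK | hK | hK
  · have hω : (0:ℝ) < Real.sqrt (-K) := Real.sqrt_pos.2 (by linarith)
    have hπ := hD hK
    have h1 : 0 < Real.sqrt (-K) * x := by positivity
    have h2 : Real.sqrt (-K) * x < Real.pi := by
      have := (lt_div_iff₀ hω).1 hπ
      nlinarith
    simp only [sK, if_pos hK]
    exact div_pos (Real.sin_pos_of_pos_of_lt_pi h1 h2) hω
  · subst hK; simpa [sK] using hx
  · have hω : (0:ℝ) < Real.sqrt K := Real.sqrt_pos.2 hK
    simp only [sK, if_neg (not_lt.2 hK.le), if_neg hK.ne']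
    exact div_pos (by positivity) hω

lemma sK_add (K x y : ℝ) : sK K (x + y) = sK K x * cK K y + cK K x * sK K y := by
  rcases lt_trichotomy K 0 with hK | hK | hK
  · have hω : (0:ℝ) < Real.sqrt (-K) := Real.sqrt_pos.2 (by linarith)
    simp only [sK, cK, if_pos hK, mul_add, Real.sin_add]
    field_simp
  · subst hK; simp [sK, cK]
  · have hω : (0:ℝ) < Real.sqrt K := Real.sqrt_pos.2 hK
    simp only [sK, cK, if_neg (not_lt.2 hK.le), if_neg hK.ne', mul_add, Real.sinh_add]
    field_simp


lemma ltDK_of_le {K x y : ℝ} (h : x ≤ y) (hy : LtDK K y) : LtDK K x :=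
  fun hK => lt_of_le_of_lt h (hy hK)

lemma ltDK_nonpos {K x : ℝ} (h : x ≤ 0) : LtDK K x := fun hK =>
  lt_of_le_of_lt h (div_pos Real.pi_pos (Real.sqrt_pos.2 (by linarith)))

lemma sK_shift_hasDerivAt (K a x : ℝ) :
    HasDerivAt (fun y => sK K (y - a)) (cK K (x - a)) x := by
  have := (sK_hasDerivAt K (x - a)).comp x ((hasDerivAt_id x).sub_const a)
  simp at this; exact this

lemma cK_shift_hasDerivAt (K a x : ℝ) :
    HasDerivAt (fun y => cK K (y - a)) (K * sK K (x - a)) x := by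
  have := (cK_hasDerivAt K (x - a)).comp x ((hasDerivAt_id x).sub_const a)
  simp at this; exact this

lemma sK_rev_hasDerivAt (K b x : ℝ) :
    HasDerivAt (fun y => sK K (b - y)) (-cK K (b - x)) x := by
  have := (sK_hasDerivAt K (b - x)).comp x ((hasDerivAt_id x).const_sub b)
  simp at this; exact this

lemma cK_rev_hasDerivAt (K b x : ℝ) :
    HasDerivAt (fun y => cK K (b - y)) (-(K * sK K (b - x))) x := by
  have := (cK_hasDerivAt K (b - x)).comp x ((hasDerivAt_id x).const_sub b)
  simp at this; exact this

lemma wronskian_key {K : ℝ} {d : ℝ → ℝ} (hd : Differentiable ℝ d)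
    (hd' : ∀ t, HasDerivAt (deriv d) (K * d t) t) (a : ℝ) (ha : d a = 0) (t b : ℝ) :
    d t * sK K (b - a) = d b * sK K (t - a) := by
  have W1 : ∀ x, d x * cK K (x - a) = deriv d x * sK K (x - a) := by
    set F := fun x => d x * cK K (x - a) - deriv d x * sK K (x - a) with hF
    have hF' : ∀ x, HasDerivAt F 0 x := by
      intro x
      have h1 : HasDerivAt (fun y => d y * cK K (y - a))
          (deriv d x * cK K (x - a) + d x * (K * sK K (x - a))) x :=
        ((hd x).hasDerivAt).mul (cK_shift_hasDerivAt K a x)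
      have h2 : HasDerivAt (fun y => deriv d y * sK K (y - a))
          (K * d x * sK K (x - a) + deriv d x * cK K (x - a)) x :=
        (hd' x).mul (sK_shift_hasDerivAt K a x)
      have h3 := h1.sub h2
      refine h3.congr_deriv ?_
      ring
    have hc := is_const_of_deriv_eq_zero (fun x => (hF' x).differentiableAt)
      (fun x => (hF' x).deriv)
    have h0 : F a = 0 := by simp [hF, ha, sK_zero, cK_zero]
    intro x
    have := (hc x a).trans h0
    simp only [hF] at this
    linarith
  have W2 : ∀ x, d x * cK K (b - x) + deriv d x * sK K (b - x) = d b := by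
    set G := fun x => d x * cK K (b - x) + deriv d x * sK K (b - x) with hG
    have hG' : ∀ x, HasDerivAt G 0 x := by
      intro x
      have h1 : HasDerivAt (fun y => d y * cK K (b - y))
          (deriv d x * cK K (b - x) + d x * -(K * sK K (b - x))) x :=
        ((hd x).hasDerivAt).mul (cK_rev_hasDerivAt K b x)
      have h2 : HasDerivAt (fun y => deriv d y * sK K (b - y))
          (K * d x * sK K (b - x) + deriv d x * -cK K (b - x)) x :=
        (hd' x).mul (sK_rev_hasDerivAt K b x)
      have h3 := h1.add h2
      refine h3.congr_deriv ?_
      ring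
    have hc := is_const_of_deriv_eq_zero (fun x => (hG' x).differentiableAt)
      (fun x => (hG' x).deriv)
    have h0 : G b = d b := by simp [hG, sK_zero, cK_zero]
    intro x
    exact (hc x b).trans h0
  have hadd := sK_add K (b - t) (t - a)
  have e : b - t + (t - a) = b - a := by ring
  rw [e] at hadd
  have w1 := W1 t
  have w2 := W2 t
  linear_combination d t * hadd + sK K (b - t) * w1 + sK K (t - a) * w2

lemma comp_right {K : ℝ} {d : ℝ → ℝ} (hd : Differentiable ℝ d)
    (hd' : ∀ t, HasDerivAt (deriv d) (K * d t) t) {a b : ℝ} (hab : a < b)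
    (hD : LtDK K (b - a)) (ha : d a = 0) (hb : 0 ≤ d b) :
    ∀ t, a ≤ t → LtDK K (t - a) → 0 ≤ d t := by
  intro t hat hDt
  rcases eq_or_lt_of_le hat with h | h
  · rw [← h]; exact ha.ge
  · have key := wronskian_key hd hd' a ha t b
    have h1 : 0 < sK K (b - a) := sK_pos _ _ (by linarith) hD
    have h2 : 0 < sK K (t - a) := sK_pos _ _ (by linarith) hDt
    nlinarith [mul_nonneg hb h2.le]

lemma comp_left {K : ℝ} {d : ℝ → ℝ} (hd : Differentiable ℝ d)
    (hd' : ∀ t, HasDerivAt (deriv d) (K * d t) t) {a b : ℝ} (hab : a < b)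
    (hD : LtDK K (b - a)) (hb : d b = 0) (ha : 0 ≤ d a) :
    ∀ t, t ≤ b → LtDK K (b - t) → 0 ≤ d t := by
  intro t htb hDt
  rcases eq_or_lt_of_le htb with h | h
  · rw [h]; exact hb.ge
  · have key := wronskian_key hd hd' b hb t a
    rw [show a - b = -(b - a) by ring, show t - b = -(b - t) by ring, sK_neg, sK_neg] at key
    have h1 : 0 < sK K (b - a) := sK_pos _ _ (by linarith) hD
    have h2 : 0 < sK K (b - t) := sK_pos _ _ (by linarith) hDt
    nlinarith [mul_nonneg ha h2.le]

lemma sol_sub {K lam : ℝ} {g h : ℝ → ℝ} (hg : IsSol K lam g) (hh : IsSol K lam h) :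
    Differentiable ℝ (fun x => g x - h x) ∧
      ∀ t, HasDerivAt (deriv (fun x => g x - h x)) (K * (g t - h t)) t := by
  have hdiff : Differentiable ℝ (fun x => g x - h x) := hg.1.sub hh.1
  have hder : deriv (fun x => g x - h x) = fun x => deriv g x - deriv h x := by
    funext x; exact ((hg.1 x).hasDerivAt.sub (hh.1 x).hasDerivAt).deriv
  refine ⟨hdiff, fun t => ?_⟩
  rw [hder]
  have h3 := (hg.2 t).sub (hh.2 t)
  refine h3.congr_deriv ?_
  ring

lemma exists_sol_aux (K lam a b fa fb : ℝ) (p p' : ℝ → ℝ)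
    (hp : ∀ x, HasDerivAt p (p' x) x) (hp' : ∀ x, HasDerivAt p' (K * p x + lam) x)
    (hab : a < b) (hD : LtDK K (b - a)) :
    ∃ g : ℝ → ℝ, IsSol K lam g ∧ g a = fa ∧ g b = fb := by
  have hσ : 0 < sK K (b - a) := sK_pos _ _ (by linarith) hD
  set σ := sK K (b - a) with hσdef
  set A := (fa - p a) / σ with hA
  set B := (fb - p b) / σ with hB
  set g : ℝ → ℝ := fun x => A * sK K (b - x) + B * sK K (x - a) + p x with hgdef
  set g' : ℝ → ℝ := fun x => A * -cK K (b - x) + B * cK K (x - a) + p' x with hg'def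
  have hg1 : ∀ x, HasDerivAt g (g' x) x := fun x =>
    (((sK_rev_hasDerivAt K b x).const_mul A).add
      ((sK_shift_hasDerivAt K a x).const_mul B)).add (hp x)
  have hderiv : deriv g = g' := funext fun x => (hg1 x).deriv
  have hg2 : ∀ x, HasDerivAt g' (K * g x + lam) x := by
    intro x
    have h1 := (((cK_rev_hasDerivAt K b x).neg).const_mul A).add
      ((cK_shift_hasDerivAt K a x).const_mul B)
    have h3 := h1.add (hp' x)
    refine h3.congr_deriv ?_
    simp only [hgdef]
    ring
  refine ⟨g, ⟨fun x => (hg1 x).differentiableAt, by rw [hderiv]; exact hg2⟩, ?_, ?_⟩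
  · show A * sK K (b - a) + B * sK K (a - a) + p a = fa
    rw [sub_self, sK_zero, mul_zero, add_zero, hA, ← hσdef]
    field_simp
    ring
  · show A * sK K (b - b) + B * sK K (b - a) + p b = fb
    rw [sub_self, sK_zero, mul_zero, zero_add, hB, ← hσdef]
    field_simp
    ring

lemma exists_sol (K lam a b fa fb : ℝ) (hab : a < b) (hD : LtDK K (b - a)) :
    ∃ g : ℝ → ℝ, IsSol K lam g ∧ g a = fa ∧ g b = fb := by
  by_cases hK : K = 0
  · refine exists_sol_aux K lam a b fa fb (fun x => lam / 2 * x ^ 2) (fun x => lam * x)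
      (fun x => ?_) (fun x => ?_) hab hD
    · have h1 : HasDerivAt (fun x : ℝ => x ^ 2) (2 * x) x := by
        simpa using hasDerivAt_pow 2 x
      have := h1.const_mul (lam / 2)
      refine this.congr_deriv ?_
      ring
    · have := (hasDerivAt_id x).const_mul lam
      refine this.congr_deriv ?_
      rw [hK]; ring
  · refine exists_sol_aux K lam a b fa fb (fun _ => -lam / K) (fun _ => 0)
      (fun x => hasDerivAt_const x _) (fun x => ?_) hab hD
    have : K * (-lam / K) + lam = 0 := by field_simp; ring
    rw [this]
    exact hasDerivAt_const x _

/-- Outer Jensen: a locally Lipschitz `f` on an open interval `I` is a Jensen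
subsolution of `f'' - K f = λ` iff for all `t₁ < t₂` in `I` with `t₂ - t₁ < D_K`, the unique
solution `g` of the ODE with `g t₁ = f t₁`, `g t₂ = f t₂` satisfies `f ≥ g` on
`(I \ (t₁, t₂)) ∩ (t₂ - D_K, t₁ + D_K)`. -/
theorem outer_jensen
    (K lam : ℝ) (I : Set ℝ) (hIopen : IsOpen I) (hIinterval : I.OrdConnected)
    (f : ℝ → ℝ)
    (hlip : ∀ t₀ ∈ I, ∃ ε > (0 : ℝ), ∃ C : NNReal,
        Set.Ioo (t₀ - ε) (t₀ + ε) ⊆ I ∧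
        LipschitzOnWith C f (Set.Ioo (t₀ - ε) (t₀ + ε))) :
    JensenSub K lam f I ↔
      (∀ t₁ ∈ I, ∀ t₂ ∈ I, t₁ < t₂ → LtDK K (t₂ - t₁) →
        ∀ g : ℝ → ℝ, IsSol K lam g → g t₁ = f t₁ → g t₂ = f t₂ →
          ∀ t ∈ I, t ∉ Set.Ioo t₁ t₂ → LtDK K (t₂ - t) → LtDK K (t - t₁) →
            g t ≤ f t) := by
  constructor
  · intro hsub t₁ h₁ t₂ h₂ h12 hD g hg hg1 hg2 t ht htout hD2 hD1
    have hcase : t ≤ t₁ ∨ t₂ ≤ t := by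
      by_contra hc
      push_neg at hc
      exact htout ⟨hc.1, hc.2⟩
    rcases hcase with hc | hc
    · rcases eq_or_lt_of_le hc with h | h
      · rw [h, hg1]
      · obtain ⟨h', hsol, ha, hb⟩ := exists_sol K lam t t₂ (f t) (f t₂) (by linarith) hD2
        have hf1 : f t₁ ≤ h' t₁ := hsub t ht t₂ h₂ (by linarith) hD2 h' hsol ha hb t₁
          ⟨h.le, h12.le⟩
        obtain ⟨hdd, hdd'⟩ := sol_sub hsol hg
        have hz : (fun x => h' x - g x) t₂ = 0 := by simp [hb, hg2]
        have hnn : 0 ≤ (fun x => h' x - g x) t₁ := by simp only; rw [hg1]; linarith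
        have := comp_left hdd hdd' h12 hD hz hnn t (by linarith) hD2
        rw [← ha]
        linarith
    · rcases eq_or_lt_of_le hc with h | h
      · rw [← h, hg2]
      · obtain ⟨h', hsol, ha, hb⟩ := exists_sol K lam t₁ t (f t₁) (f t) (by linarith) hD1
        have hf2 : f t₂ ≤ h' t₂ := hsub t₁ h₁ t ht (by linarith) hD1 h' hsol ha hb t₂
          ⟨h12.le, h.le⟩
        obtain ⟨hdd, hdd'⟩ := sol_sub hsol hg
        have hz : (fun x => h' x - g x) t₁ = 0 := by simp [ha, hg1]
        have hnn : 0 ≤ (fun x => h' x - g x) t₂ := by simp only; rw [hg2]; linarith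
        have := comp_right hdd hdd' h12 hD hz hnn t (by linarith) hD1
        rw [← hb]
        linarith
  · intro houter t₁ h₁ t₂ h₂ h12 hD g hg hg1 hg2 t ht
    rcases eq_or_lt_of_le ht.1 with h | hlt1
    · rw [← h, ← hg1]
    rcases eq_or_lt_of_le ht.2 with h | hlt2
    · rw [h, ← hg2]
    have htI : t ∈ I := hIinterval.out h₁ h₂ ht
    have hDt : LtDK K (t - t₁) := ltDK_of_le (by linarith) hD
    obtain ⟨h', hsol, ha, hb⟩ := exists_sol K lam t₁ t (f t₁) (f t) hlt1 hDt
    have hout : h' t₂ ≤ f t₂ := by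
      refine houter t₁ h₁ t htI hlt1 hDt h' hsol ha hb t₂ h₂ ?_ (ltDK_nonpos (by linarith)) hD
      intro hmem
      exact absurd hmem.2 (not_lt.2 hlt2.le)
    obtain ⟨hdd, hdd'⟩ := sol_sub hg hsol
    have hz : (fun x => g x - h' x) t₁ = 0 := by simp [ha, hg1]
    have hnn : 0 ≤ (fun x => g x - h' x) t₂ := by simp only; rw [hg2]; linarith
    have := comp_right hdd hdd' h12 hD hz hnn t hlt1.le hDt
    rw [← hb]
    linarith
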